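/- arXiv:2502.00812 — 4 statements merged into one kernel-verified Lean document; each statement's English description precedes it below -/
import Mathlib

section
/- The vector μ̃(b;x) with components μ̃_j(b;x) = x_j Z_A(b−a_j;x)/Z_A(b;x) satisfies the linear equation A μ̃(b;x) = b, i.e., Σ_{j∈[m]} a_{ij} x_j Z_A(b−a_j;x) = b_i Z_A(b;x) for all i ∈ [d]. -/
open Finset

/-- The A-hypergeometric polynomial. -/
noncomputable def Zpoly {m : ℕ} (F : Finset (Fin m → ℕ)) (x : Fin m → ℝ) : ℝ :=
  ∑ v ∈ F, ∏ j, x j ^ (v j) / (Nat.factorial (v j) : ℝ)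

/-- The UMVUE `μ̃_j = x_j Z_A(b-a_j;x)/Z_A(b;x)` satisfies `A μ̃ = b`, i.e.
`∑_j a_{ij} x_j Z_A(b-a_j;x) = b_i Z_A(b;x)` for all `i`. -/
theorem UMVUE_satisfies_estimating_equation {d m : ℕ}
    (A : Matrix (Fin d) (Fin m) ℤ) (b : Fin d → ℤ)
    (x : Fin m → ℝ) (hx : ∀ k, 0 < x k)
    (Fb : Finset (Fin m → ℕ)) (Fj : Fin m → Finset (Fin m → ℕ))
    (hFb : ∀ v : Fin m → ℕ, v ∈ Fb ↔ ∀ i, ∑ k, A i k * (v k : ℤ) = b i)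
    (hFj : ∀ j, ∀ v : Fin m → ℕ,
      v ∈ Fj j ↔ ∀ i, ∑ k, A i k * (v k : ℤ) = b i - A i j)
    (hZ : Zpoly Fb x ≠ 0) :
    ∀ i, ∑ j, (A i j : ℝ) * x j * Zpoly (Fj j) x = (b i : ℝ) * Zpoly Fb x := by
  intro i
  have key : ∀ j, x j * Zpoly (Fj j) x
      = ∑ w ∈ Fb, (w j : ℝ) * ∏ k, x k ^ (w k) / (Nat.factorial (w k) : ℝ) := by
    intro j
    rw [Zpoly, Finset.mul_sum]
    conv_rhs => rw [← Finset.sum_filter_of_ne (p := fun w => w j ≠ 0)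
      (fun w _ hf h0 => hf (by rw [h0]; simp))]
    refine Finset.sum_nbij' (i := fun v k => if k = j then v k + 1 else v k)
      (j := fun w k => if k = j then w k - 1 else w k) ?_ ?_ ?_ ?_ ?_
    · intro v hv
      rw [Finset.mem_filter]
      refine ⟨(hFb _).mpr fun i' => ?_, by simp⟩
      have h1 : ∀ k, A i' k * ((if k = j then v k + 1 else v k : ℕ) : ℤ)
          = A i' k * (v k : ℤ) + (if k = j then A i' k else 0) := by
        intro k; split <;> push_cast <;> ring
      simp only [h1, Finset.sum_add_distrib, Finset.sum_ite_eq', Finset.mem_univ,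
        if_true, (hFj j v).mp hv i']
      ring
    · intro w hw
      rw [Finset.mem_filter] at hw
      obtain ⟨hw1, hw2⟩ := hw
      refine (hFj j _).mpr fun i' => ?_
      have h1 : ∀ k, A i' k * ((if k = j then w k - 1 else w k : ℕ) : ℤ)
          = A i' k * (w k : ℤ) - (if k = j then A i' k else 0) := by
        intro k
        split
        · next h =>
            subst h
            have h2 : 1 ≤ w k := Nat.one_le_iff_ne_zero.mpr hw2
            rw [Nat.cast_sub h2]
            push_cast
            ring
        · ring
      simp only [h1, Finset.sum_sub_distrib, Finset.sum_ite_eq', Finset.mem_univ,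
        if_true, (hFb w).mp hw1 i']
    · intro v hv
      funext k
      by_cases h : k = j <;> simp [h]
    · intro w hw
      obtain ⟨-, hw2⟩ := Finset.mem_filter.mp hw
      funext k
      by_cases h : k = j
      · subst h; simp; omega
      · simp [h]
    · intro v hv
      have hsplit : ∀ (u : Fin m → ℕ),
          (∏ k, x k ^ (u k) / (Nat.factorial (u k) : ℝ))
          = (∏ k ∈ Finset.univ.erase j, x k ^ (u k) / (Nat.factorial (u k) : ℝ))
            * (x j ^ (u j) / (Nat.factorial (u j) : ℝ)) := fun u =>
        (Finset.prod_erase_mul _ _ (Finset.mem_univ j)).symm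
      rw [hsplit, hsplit]
      have hrest : (∏ k ∈ Finset.univ.erase j,
            x k ^ (v k) / (Nat.factorial (v k) : ℝ))
          = ∏ k ∈ Finset.univ.erase j,
            x k ^ ((if k = j then v k + 1 else v k)) /
              (Nat.factorial ((if k = j then v k + 1 else v k)) : ℝ) := by
        refine Finset.prod_congr rfl fun k hk => ?_
        rw [if_neg (Finset.ne_of_mem_erase hk)]
      rw [← hrest]
      simp only [if_pos rfl, ite_true, if_true]
      have hfac : (Nat.factorial (v j + 1) : ℝ) = (v j + 1 : ℝ) * (Nat.factorial (v j) : ℝ) := by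
        rw [Nat.factorial_succ]; push_cast; ring
      have hne : (Nat.factorial (v j) : ℝ) ≠ 0 := Nat.cast_ne_zero.mpr (Nat.factorial_ne_zero _)
      have hne1 : (v j + 1 : ℝ) ≠ 0 := by positivity
      rw [pow_succ, hfac]
      push_cast
      field_simp
  calc ∑ j, (A i j : ℝ) * x j * Zpoly (Fj j) x
      = ∑ j, ∑ w ∈ Fb, (A i j : ℝ) * ((w j : ℝ)
          * ∏ k, x k ^ (w k) / (Nat.factorial (w k) : ℝ)) := by
        refine Finset.sum_congr rfl fun j _ => ?_
        rw [mul_assoc, key j, Finset.mul_sum]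
    _ = ∑ w ∈ Fb, (∑ j, (A i j : ℝ) * (w j : ℝ))
          * ∏ k, x k ^ (w k) / (Nat.factorial (w k) : ℝ) := by
        rw [Finset.sum_comm]
        refine Finset.sum_congr rfl fun w _ => ?_
        rw [Finset.sum_mul]
        refine Finset.sum_congr rfl fun j _ => by ring
    _ = (b i : ℝ) * Zpoly Fb x := by
        rw [Zpoly, Finset.mul_sum]
        refine Finset.sum_congr rfl fun w hw => ?_
        congr 1
        have := (hFb w).mp hw i
        have : ((∑ k, A i k * (w k : ℤ) : ℤ) : ℝ) = ((b i : ℤ) : ℝ) := by rw [this]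
        push_cast at this
        exact this
end

section
/- The transition probabilities P(β, β−a_j; x) = (Z_A(β−a_j;x)/Z_A(β;x)) · x_j/deg(β), j ∈ [m], form a probability distribution on [m]: each is nonnegative and they sum to 1, whenever β ∈ ℕA with deg(β) ≥ 1 and x ∈ ℝ^m_{>0}. -/
/-! Write `t(v) = xᵛ / v!`. Since `t(w) · x_j = (w_j + 1) · t(w + e_j)` and `w ↦ w + e_j` maps the
fibre of `β - a_j` onto the part of the fibre of `β` with `v_j ≠ 0`, we get
`Z_A(β - a_j; x) · x_j = ∑_{Av = β} v_j t(v)`. Summing over `j` gives `∑_{Av = β} |v| t(v)`, and the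
homogeneity witness `c` forces `|v| = deg β` on the fibre, so the weights sum to
`deg β · Z_A(β; x)`. -/

open Finset

section ScaledMonomial

variable {ι : Type*} [Fintype ι]

noncomputable def scaledMonomial (x : ι → ℝ) (v : ι → ℕ) : ℝ :=
  ∏ k, x k ^ v k / (v k).factorial

theorem scaledMonomial_pos {x : ι → ℝ} (hx : ∀ k, 0 < x k) (v : ι → ℕ) :
    0 < scaledMonomial x v :=
  prod_pos fun k _ => div_pos (pow_pos (hx k) _) (by positivity)

theorem scaledMonomial_mul_apply [DecidableEq ι] (x : ι → ℝ) (w : ι → ℕ) (j : ι) :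
    scaledMonomial x w * x j = (w j + 1) * scaledMonomial x (w + Pi.single j 1) := by
  have factor : ∀ k, x k ^ (w + Pi.single j 1 : ι → ℕ) k /
      ((w + Pi.single j 1 : ι → ℕ) k).factorial * (if k = j then ((w j : ℝ) + 1) else 1) =
      x k ^ w k / (w k).factorial * (if k = j then x j else 1) := by
    intro k
    rcases eq_or_ne k j with rfl | hk
    · simp only [Pi.add_apply, Pi.single_eq_same, if_true, Nat.factorial_succ, pow_succ]
      push_cast
      field_simp
    · simp [hk]
  have := prod_congr rfl fun k (_ : k ∈ univ) => factor k
  simp only [prod_mul_distrib, Fintype.prod_ite_eq'] at this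
  rw [scaledMonomial, scaledMonomial, ← this, mul_comm]

end ScaledMonomial

theorem Zpoly_eq_sum_scaledMonomial {m : ℕ} (F : Finset (Fin m → ℕ)) (x : Fin m → ℝ) :
    Zpoly F x = ∑ v ∈ F, scaledMonomial x v := rfl

theorem cast_sum_eq_of_homogeneous {ι κ K : Type*} [Fintype ι] [Fintype κ] [Field K]
    (A : Matrix κ ι ℤ) (c : κ → K) (hc : ∀ k, ∑ i, c i * (A i k : K) = 1) (β : κ → ℤ) {v : ι → ℕ}
    (hv : ∀ i, ∑ k, A i k * (v k : ℤ) = β i) :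
    ((∑ k, v k : ℕ) : K) = ∑ i, c i * (β i : K) := by
  simp_rw [← hv]
  push_cast
  simp_rw [mul_sum, sum_comm (γ := κ), ← mul_assoc, ← sum_mul, hc, one_mul]

section Fibres

variable {ι κ : Type*} [DecidableEq ι]

theorem sum_mul_cast_add_single [Fintype ι] (a : ι → ℤ) (w : ι → ℕ) (j : ι) :
    ∑ k, a k * ((w + Pi.single j 1 : ι → ℕ) k : ℤ) = ∑ k, a k * (w k : ℤ) + a j := by
  simp [mul_add, sum_add_distrib, Pi.single_apply]

theorem sub_single_add_single {v : ι → ℕ} {j : ι} (hv : v j ≠ 0) :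
    v - Pi.single j 1 + Pi.single j 1 = v := by
  refine tsub_add_cancel_of_le fun k => ?_
  rcases eq_or_ne k j with rfl | hk
  · simpa [Nat.one_le_iff_ne_zero] using hv
  · simp [hk]

theorem sum_fibre_add_single [Fintype ι] {M : Type*} [AddCommMonoid M] (A : Matrix κ ι ℤ)
    (β : κ → ℤ) (j : ι) (F G : Finset (ι → ℕ)) (hF : ∀ v, v ∈ F ↔ ∀ i, ∑ k, A i k * (v k : ℤ) = β i)
    (hG : ∀ w, w ∈ G ↔ ∀ i, ∑ k, A i k * (w k : ℤ) = β i - A i j) (f : (ι → ℕ) → M) :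
    ∑ w ∈ G, f (w + Pi.single j 1) = ∑ v ∈ F with v j ≠ 0, f v := by
  refine sum_nbij' (· + Pi.single j 1) (· - Pi.single j 1) ?_ ?_
    (fun w _ => add_tsub_cancel_right w _) (fun v hv => sub_single_add_single (mem_filter.1 hv).2)
    (fun _ _ => rfl)
  · intro w hw
    rw [mem_filter, hF]
    refine ⟨fun i => by rw [sum_mul_cast_add_single, (hG w).1 hw i, sub_add_cancel], by simp⟩
  · intro v hv
    obtain ⟨hvF, hvj⟩ := mem_filter.1 hv
    rw [hG]
    intro i
    have := (hF v).1 hvF i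
    rw [← sub_single_add_single hvj, sum_mul_cast_add_single] at this
    exact eq_sub_of_add_eq this

end Fibres

theorem Zpoly_mul_apply_eq_sum {d m : ℕ} (A : Matrix (Fin d) (Fin m) ℤ) (β : Fin d → ℤ)
    (x : Fin m → ℝ) (j : Fin m) (Fβ G : Finset (Fin m → ℕ))
    (hFβ : ∀ v, v ∈ Fβ ↔ ∀ i, ∑ k, A i k * (v k : ℤ) = β i)
    (hG : ∀ w, w ∈ G ↔ ∀ i, ∑ k, A i k * (w k : ℤ) = β i - A i j) :
    Zpoly G x * x j = ∑ v ∈ Fβ, (v j : ℝ) * scaledMonomial x v := by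
  calc Zpoly G x * x j
      = ∑ w ∈ G,
          ((w + Pi.single j 1 : Fin m → ℕ) j : ℝ) * scaledMonomial x (w + Pi.single j 1) := by
        rw [Zpoly_eq_sum_scaledMonomial, sum_mul]
        refine sum_congr rfl fun w _ => ?_
        simp [scaledMonomial_mul_apply]
    _ = ∑ v ∈ Fβ with v j ≠ 0, (v j : ℝ) * scaledMonomial x v :=
        sum_fibre_add_single A β j Fβ G hFβ hG (fun v => (v j : ℝ) * scaledMonomial x v)
    _ = ∑ v ∈ Fβ, (v j : ℝ) * scaledMonomial x v :=
        sum_filter_of_ne fun v _ h hv => h (by simp [hv])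

theorem sum_Zpoly_mul_apply_eq_deg_mul {d m : ℕ} (A : Matrix (Fin d) (Fin m) ℤ)
    (c : Fin d → ℚ) (hc : ∀ j, ∑ i, c i * (A i j : ℚ) = 1) (β : Fin d → ℤ) (x : Fin m → ℝ)
    (Fβ : Finset (Fin m → ℕ)) (Fj : Fin m → Finset (Fin m → ℕ))
    (hFβ : ∀ v, v ∈ Fβ ↔ ∀ i, ∑ k, A i k * (v k : ℤ) = β i)
    (hFj : ∀ j w, w ∈ Fj j ↔ ∀ i, ∑ k, A i k * (w k : ℤ) = β i - A i j) :
    ∑ j, Zpoly (Fj j) x * x j = ((∑ i, c i * (β i : ℚ) : ℚ) : ℝ) * Zpoly Fβ x := by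
  simp_rw [Zpoly_mul_apply_eq_sum A β x _ Fβ _ hFβ (hFj _), Zpoly_eq_sum_scaledMonomial, mul_sum]
  rw [sum_comm]
  refine sum_congr rfl fun v hv => ?_
  rw [← sum_mul, ← cast_sum_eq_of_homogeneous A c hc β ((hFβ v).1 hv)]
  push_cast
  rfl

/-- The transition probabilities
`P(β, β-a_j; x) = (Z_A(β-a_j;x)/Z_A(β;x)) · x_j / deg(β)` form a probability
distribution on `[m]`: each is nonnegative and they sum to `1`. -/
theorem transition_probabilities_form_distribution {d m : ℕ}
    (A : Matrix (Fin d) (Fin m) ℤ)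
    (c : Fin d → ℚ) (hc : ∀ j, ∑ i, c i * (A i j : ℚ) = 1)
    (β : Fin d → ℤ)
    (hβ : ∃ v : Fin m → ℕ, ∀ i, ∑ k, A i k * (v k : ℤ) = β i)
    (hdeg : 1 ≤ (∑ i, c i * (β i : ℚ)))
    (x : Fin m → ℝ) (hx : ∀ k, 0 < x k)
    (Fβ : Finset (Fin m → ℕ)) (Fj : Fin m → Finset (Fin m → ℕ))
    (hFβ : ∀ v : Fin m → ℕ, v ∈ Fβ ↔ ∀ i, ∑ k, A i k * (v k : ℤ) = β i)
    (hFj : ∀ j, ∀ v : Fin m → ℕ,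
      v ∈ Fj j ↔ ∀ i, ∑ k, A i k * (v k : ℤ) = β i - A i j) :
    (∀ j, 0 ≤ Zpoly (Fj j) x / Zpoly Fβ x * x j / ((∑ i, c i * (β i : ℚ) : ℚ) : ℝ))
    ∧ ∑ j, Zpoly (Fj j) x / Zpoly Fβ x * x j / ((∑ i, c i * (β i : ℚ) : ℚ) : ℝ) = 1 := by
  have hD : (0 : ℝ) < ((∑ i, c i * (β i : ℚ) : ℚ) : ℝ) := Rat.cast_pos.2 (by linarith)
  set D : ℝ := ((∑ i, c i * (β i : ℚ) : ℚ) : ℝ)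
  obtain ⟨v₀, hv₀⟩ := hβ
  have hZβ : 0 < Zpoly Fβ x :=
    sum_pos (fun v _ => scaledMonomial_pos hx v) ⟨v₀, (hFβ v₀).2 hv₀⟩
  have hZj : ∀ j, 0 ≤ Zpoly (Fj j) x := fun j =>
    sum_nonneg fun v _ => (scaledMonomial_pos hx v).le
  refine ⟨fun j => div_nonneg (mul_nonneg (div_nonneg (hZj j) hZβ.le) (hx j).le) hD.le, ?_⟩
  calc ∑ j, Zpoly (Fj j) x / Zpoly Fβ x * x j / D
      = (∑ j, Zpoly (Fj j) x * x j) / (D * Zpoly Fβ x) := by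
        rw [sum_div]
        refine sum_congr rfl fun j _ => ?_
        field_simp
    _ = 1 := by
        rw [sum_Zpoly_mul_apply_eq_deg_mul A c hc β x Fβ Fj hFβ hFj, div_self (mul_pos hD hZβ).ne']
end

section
/- For the 3×3 quasi-independence model with a structural zero in cell (3,3), the A-hypergeometric polynomial has the closed form Z_A(b;1) = (u_{1·}+u_{2·})!(u_{·1}+u_{·2})! / (u_{·1}! u_{·2}! u_{·3}! u_{1·}! u_{2·}! u_{3·}! (u_{·1}+u_{·2}−u_{3·})!), where b records the row sums u_{1·}, u_{2·}, u_{3·}=u_{31}+u_{32} and column sums u_{·1}, u_{·2}, u_{·3}=u_{13}+u_{23}. -/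
open Finset

private lemma factQ_ne (n : ℕ) : ((n.factorial : ℚ)) ≠ 0 := by
  exact_mod_cast Nat.factorial_ne_zero n

private lemma vandermonde_range (p q s : ℕ) :
    ∑ x ∈ range (s+1), ((p.choose x : ℚ) * (q.choose (s-x) : ℚ)) = ((p+q).choose s : ℚ) := by
  have h := Nat.add_choose_eq p q s
  rw [Finset.Nat.sum_antidiagonal_eq_sum_range_succ (fun i j => p.choose i * q.choose j)] at h
  rw [h]
  push_cast
  rfl

private lemma qvand (p q s n : ℕ) (h : p ≤ n ∨ s ≤ n) :
    ∑ x ∈ range (n+1),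
      (if x ≤ p ∧ s - x ≤ q ∧ x ≤ s then ((p.choose x : ℚ) * (q.choose (s-x) : ℚ)) else 0)
    = ((p+q).choose s : ℚ) := by
  set m := max n s with hm
  have h1 : ∑ x ∈ range (n+1),
      (if x ≤ p ∧ s - x ≤ q ∧ x ≤ s then ((p.choose x : ℚ) * (q.choose (s-x) : ℚ)) else 0)
      = ∑ x ∈ range (m+1),
      (if x ≤ p ∧ s - x ≤ q ∧ x ≤ s then ((p.choose x : ℚ) * (q.choose (s-x) : ℚ)) else 0) := by
    apply Finset.sum_subset
    · exact range_subset_range.2 (by omega)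
    · intro x hx hnx
      simp only [mem_range] at hx hnx
      rw [if_neg]
      omega
  have h2 : ∑ x ∈ range (m+1),
      (if x ≤ p ∧ s - x ≤ q ∧ x ≤ s then ((p.choose x : ℚ) * (q.choose (s-x) : ℚ)) else 0)
      = ∑ x ∈ range (s+1),
      (if x ≤ p ∧ s - x ≤ q ∧ x ≤ s then ((p.choose x : ℚ) * (q.choose (s-x) : ℚ)) else 0) := by
    symm
    apply Finset.sum_subset
    · exact range_subset_range.2 (by omega)
    · intro x hx hnx
      simp only [mem_range] at hx hnx
      rw [if_neg]
      omega
  have h3 : ∑ x ∈ range (s+1),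
      (if x ≤ p ∧ s - x ≤ q ∧ x ≤ s then ((p.choose x : ℚ) * (q.choose (s-x) : ℚ)) else 0)
      = ∑ x ∈ range (s+1), ((p.choose x : ℚ) * (q.choose (s-x) : ℚ)) := by
    apply Finset.sum_congr rfl
    intro x hx
    simp only [mem_range] at hx
    by_cases hg : x ≤ p ∧ s - x ≤ q ∧ x ≤ s
    · rw [if_pos hg]
    · rw [if_neg hg]
      have : p.choose x = 0 ∨ q.choose (s-x) = 0 := by
        rcases Nat.lt_or_ge p x with h' | h'
        · exact Or.inl (Nat.choose_eq_zero_of_lt h')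
        · rcases Nat.lt_or_ge q (s - x) with h'' | h''
          · exact Or.inr (Nat.choose_eq_zero_of_lt h'')
          · omega
      rcases this with h' | h' <;> simp [h']
  rw [h1, h2, h3, vandermonde_range]

/-- Closed form of `Z_A(b;1)` for the 3×3 quasi-independence model with a
structural zero in cell (3,3). Counts are
`u = (u₁₁,u₁₂,u₁₃,u₂₁,u₂₂,u₂₃,u₃₁,u₃₂) : Fin 8 → ℕ`, with row sums
`R₁, R₂, R₃ = u₃₁+u₃₂` and column sums `C₁, C₂, C₃ = u₁₃+u₂₃`. -/
theorem Zpoly_quasi_independence_closed_form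
    (R₁ R₂ R₃ C₁ C₂ C₃ : ℕ)
    (hcons : R₁ + R₂ + R₃ = C₁ + C₂ + C₃)
    (h1 : R₃ ≤ C₁ + C₂) (h2 : C₃ ≤ R₁ + R₂) :
    ∑ u ∈ (Fintype.piFinset fun _ : Fin 8 => range (R₁ + R₂ + R₃ + 1)).filter
        (fun u : Fin 8 → ℕ =>
          u 0 + u 1 + u 2 = R₁ ∧ u 3 + u 4 + u 5 = R₂ ∧ u 6 + u 7 = R₃ ∧
          u 0 + u 3 + u 6 = C₁ ∧ u 1 + u 4 + u 7 = C₂ ∧ u 2 + u 5 = C₃),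
      (1 : ℚ) / ∏ k, (Nat.factorial (u k) : ℚ)
    = (Nat.factorial (R₁ + R₂) * Nat.factorial (C₁ + C₂) : ℚ) /
        (Nat.factorial C₁ * Nat.factorial C₂ * Nat.factorial C₃ *
         Nat.factorial R₁ * Nat.factorial R₂ * Nat.factorial R₃ *
         Nat.factorial (C₁ + C₂ - R₃)) := by
  classical
  obtain ⟨M, hMdef⟩ : ∃ m, m = R₁ + R₂ - C₃ := ⟨_, rfl⟩
  set g : ℕ → ℕ → ℕ → ℚ := fun a c x =>
    (1:ℚ) / ((x.factorial : ℚ) * ((R₁ - a - x).factorial : ℚ) * (a.factorial : ℚ) *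
      ((C₁ - c - x).factorial : ℚ) * ((R₂ - (C₃ - a) - (C₁ - c - x)).factorial : ℚ) *
      ((C₃ - a).factorial : ℚ) * (c.factorial : ℚ) * ((R₃ - c).factorial : ℚ)) with hg
  set P : ℕ → ℕ → ℕ → Prop := fun a c x =>
    x + a ≤ R₁ ∧ x + c ≤ C₁ ∧ (C₁ - c - x) + (C₃ - a) ≤ R₂ with hP
  have step1 :
      ∑ u ∈ (Fintype.piFinset fun _ : Fin 8 => range (R₁ + R₂ + R₃ + 1)).filter
        (fun u : Fin 8 → ℕ =>
          u 0 + u 1 + u 2 = R₁ ∧ u 3 + u 4 + u 5 = R₂ ∧ u 6 + u 7 = R₃ ∧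
          u 0 + u 3 + u 6 = C₁ ∧ u 1 + u 4 + u 7 = C₂ ∧ u 2 + u 5 = C₃),
        (1 : ℚ) / ∏ k, (Nat.factorial (u k) : ℚ)
      = ∑ t ∈ ((range (C₃+1)) ×ˢ (range (R₃+1)) ×ˢ (range (C₁+1))).filter
          (fun t : ℕ × ℕ × ℕ => P t.1 t.2.1 t.2.2),
          g t.1 t.2.1 t.2.2 := by
    apply Finset.sum_nbij' (i := fun u : Fin 8 → ℕ => (u 2, u 6, u 0))
      (j := fun t : ℕ × ℕ × ℕ =>
        ![t.2.2, R₁ - t.1 - t.2.2, t.1, C₁ - t.2.1 - t.2.2,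
          R₂ - (C₃ - t.1) - (C₁ - t.2.1 - t.2.2), C₃ - t.1, t.2.1, R₃ - t.2.1])
    · intro u hu
      simp only [mem_filter, Fintype.mem_piFinset, mem_range, mem_product] at hu ⊢
      obtain ⟨hmem, e1, e2, e3, e4, e5, e6⟩ := hu
      refine ⟨⟨by omega, by omega, by omega⟩, ?_⟩
      simp only [hP]
      refine ⟨by omega, by omega, by omega⟩
    · intro t ht
      simp only [mem_filter, mem_product, mem_range, hP] at ht
      obtain ⟨⟨hta, htc, htx⟩, q1, q2, q3⟩ := ht
      simp only [mem_filter, Fintype.mem_piFinset, mem_range]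
      refine ⟨fun k => ?_, ?_, ?_, ?_, ?_, ?_, ?_⟩
      · fin_cases k
        · show t.2.2 < R₁ + R₂ + R₃ + 1; omega
        · show R₁ - t.1 - t.2.2 < R₁ + R₂ + R₃ + 1; omega
        · show t.1 < R₁ + R₂ + R₃ + 1; omega
        · show C₁ - t.2.1 - t.2.2 < R₁ + R₂ + R₃ + 1; omega
        · show R₂ - (C₃ - t.1) - (C₁ - t.2.1 - t.2.2) < R₁ + R₂ + R₃ + 1; omega
        · show C₃ - t.1 < R₁ + R₂ + R₃ + 1; omega
        · show t.2.1 < R₁ + R₂ + R₃ + 1; omega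
        · show R₃ - t.2.1 < R₁ + R₂ + R₃ + 1; omega
      · show t.2.2 + (R₁ - t.1 - t.2.2) + t.1 = R₁; omega
      · show (C₁ - t.2.1 - t.2.2) + (R₂ - (C₃ - t.1) - (C₁ - t.2.1 - t.2.2)) + (C₃ - t.1) = R₂
        omega
      · show t.2.1 + (R₃ - t.2.1) = R₃; omega
      · show t.2.2 + (C₁ - t.2.1 - t.2.2) + t.2.1 = C₁; omega
      · show (R₁ - t.1 - t.2.2) + (R₂ - (C₃ - t.1) - (C₁ - t.2.1 - t.2.2)) + (R₃ - t.2.1) = C₂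
        omega
      · show t.1 + (C₃ - t.1) = C₃; omega
    · intro u hu
      simp only [mem_filter, Fintype.mem_piFinset, mem_range] at hu
      obtain ⟨hmem, e1, e2, e3, e4, e5, e6⟩ := hu
      funext k
      fin_cases k
      · rfl
      · show R₁ - u 2 - u 0 = u 1; omega
      · rfl
      · show C₁ - u 6 - u 0 = u 3; omega
      · show R₂ - (C₃ - u 2) - (C₁ - u 6 - u 0) = u 4; omega
      · show C₃ - u 2 = u 5; omega
      · rfl
      · show R₃ - u 6 = u 7; omega
    · intro t ht
      rfl
    · intro u hu
      simp only [mem_filter, Fintype.mem_piFinset, mem_range] at hu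
      obtain ⟨hmem, e1, e2, e3, e4, e5, e6⟩ := hu
      rw [Fin.prod_univ_eight]
      simp only [hg]
      have w1 : R₁ - u 2 - u 0 = u 1 := by omega
      have w2 : C₁ - u 6 - u 0 = u 3 := by omega
      have w3 : C₃ - u 2 = u 5 := by omega
      have w4 : R₃ - u 6 = u 7 := by omega
      have w5 : R₂ - (C₃ - u 2) - (C₁ - u 6 - u 0) = u 4 := by omega
      rw [w5, w1, w2, w3, w4]
  have e0 : ∑ t ∈ ((range (C₃+1)) ×ˢ (range (R₃+1)) ×ˢ (range (C₁+1))).filter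
          (fun t : ℕ × ℕ × ℕ => P t.1 t.2.1 t.2.2),
          g t.1 t.2.1 t.2.2
      = ∑ a ∈ range (C₃+1), ∑ c ∈ range (R₃+1), ∑ x ∈ range (C₁+1),
          (if P a c x then g a c x else 0) := by
    rw [Finset.sum_filter, Finset.sum_product]
    apply Finset.sum_congr rfl
    intro a _
    rw [Finset.sum_product]
  have hA : ∀ a c : ℕ, a ≤ C₃ → c ≤ R₃ →
      (∑ x ∈ range (C₁+1), if P a c x then g a c x else 0)
      = (if a ≤ R₁ ∧ C₃ - a ≤ R₂ then
          (1:ℚ) / (((R₁-a).factorial : ℚ) * ((R₂-(C₃-a)).factorial : ℚ) *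
            (a.factorial : ℚ) * ((C₃-a).factorial : ℚ)) else 0)
        * (if c ≤ C₁ then (M.choose (C₁-c) : ℚ) / ((c.factorial : ℚ) * ((R₃-c).factorial : ℚ))
           else 0) := by
    intro a c ha hc
    by_cases hOa : a ≤ R₁ ∧ C₃ - a ≤ R₂
    · by_cases hOc : c ≤ C₁
      · rw [if_pos hOa, if_pos hOc]
        have key : ∀ x ∈ range (C₁+1), (if P a c x then g a c x else 0)
            = (if x ≤ R₁ - a ∧ C₁ - c - x ≤ R₂ - (C₃ - a) ∧ x ≤ C₁ - c
                then (((R₁-a).choose x : ℚ) * ((R₂-(C₃-a)).choose (C₁-c-x) : ℚ)) else 0)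
              * ((1:ℚ) / (((R₁-a).factorial : ℚ) * ((R₂-(C₃-a)).factorial : ℚ) *
                  (a.factorial : ℚ) * ((C₃-a).factorial : ℚ) *
                  (c.factorial : ℚ) * ((R₃-c).factorial : ℚ))) := by
          intro x hx
          simp only [mem_range] at hx
          by_cases hgd : P a c x
          · have hgd' : x + a ≤ R₁ ∧ x + c ≤ C₁ ∧ (C₁ - c - x) + (C₃ - a) ≤ R₂ := by
              simpa [hP] using hgd
            obtain ⟨p1, p2, p3⟩ := hgd'
            rw [if_pos hgd, if_pos (by refine ⟨?_, ?_, ?_⟩ <;> omega)]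
            have e1 : ((R₁-a).choose x : ℚ)
                = ((R₁-a).factorial : ℚ) / ((x.factorial : ℚ) * ((R₁ - a - x).factorial : ℚ)) :=
              Nat.cast_choose ℚ (by omega)
            have e2 : ((R₂-(C₃-a)).choose (C₁-c-x) : ℚ)
                = ((R₂-(C₃-a)).factorial : ℚ) /
                  (((C₁ - c - x).factorial : ℚ) * ((R₂ - (C₃-a) - (C₁ - c - x)).factorial : ℚ)) := by
              exact Nat.cast_choose ℚ (by omega)
            rw [e1, e2]
            simp only [hg]
            field_simp
          · rw [if_neg hgd, if_neg (by simp only [hP] at hgd; omega), zero_mul]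
        rw [Finset.sum_congr rfl key, ← Finset.sum_mul,
          qvand (R₁-a) (R₂-(C₃-a)) (C₁-c) C₁ (Or.inr (by omega))]
        have hpq : (R₁-a) + (R₂-(C₃-a)) = M := by omega
        rw [hpq]
        ring
      · rw [if_neg hOc, mul_zero]
        apply Finset.sum_eq_zero
        intro x hx
        rw [if_neg]
        simp only [hP]
        omega
    · rw [if_neg hOa, zero_mul]
      apply Finset.sum_eq_zero
      intro x hx
      rw [if_neg]
      simp only [hP]
      omega
  have step2 : ∑ a ∈ range (C₃+1), ∑ c ∈ range (R₃+1),
      (∑ x ∈ range (C₁+1), if P a c x then g a c x else 0)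
      = (∑ a ∈ range (C₃+1), (if a ≤ R₁ ∧ C₃ - a ≤ R₂ then
          (1:ℚ) / (((R₁-a).factorial : ℚ) * ((R₂-(C₃-a)).factorial : ℚ) *
            (a.factorial : ℚ) * ((C₃-a).factorial : ℚ)) else 0))
        * (∑ c ∈ range (R₃+1), (if c ≤ C₁ then
            (M.choose (C₁-c) : ℚ) / ((c.factorial : ℚ) * ((R₃-c).factorial : ℚ)) else 0)) := by
    rw [Finset.sum_mul_sum]
    apply Finset.sum_congr rfl
    intro a ha
    apply Finset.sum_congr rfl
    intro c hc
    simp only [mem_range] at ha hc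
    exact hA a c (by omega) (by omega)
  have hasum : ∑ a ∈ range (C₃+1), (if a ≤ R₁ ∧ C₃ - a ≤ R₂ then
      (1:ℚ) / (((R₁-a).factorial : ℚ) * ((R₂-(C₃-a)).factorial : ℚ) *
        (a.factorial : ℚ) * ((C₃-a).factorial : ℚ)) else 0)
      = ((R₁+R₂).choose R₁ : ℚ) / ((C₃.factorial : ℚ) * (M.factorial : ℚ)) := by
    have key : ∀ a ∈ range (C₃+1), (if a ≤ R₁ ∧ C₃ - a ≤ R₂ then
        (1:ℚ) / (((R₁-a).factorial : ℚ) * ((R₂-(C₃-a)).factorial : ℚ) *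
          (a.factorial : ℚ) * ((C₃-a).factorial : ℚ)) else 0)
        = (if a ≤ C₃ ∧ R₁ - a ≤ M ∧ a ≤ R₁
            then ((C₃.choose a : ℚ) * (M.choose (R₁-a) : ℚ)) else 0)
          / ((C₃.factorial : ℚ) * (M.factorial : ℚ)) := by
      intro a ha
      simp only [mem_range] at ha
      by_cases hgd : a ≤ R₁ ∧ C₃ - a ≤ R₂
      · rw [if_pos hgd, if_pos (by omega)]
        have e1 : (C₃.choose a : ℚ)
            = (C₃.factorial : ℚ) / ((a.factorial : ℚ) * ((C₃ - a).factorial : ℚ)) :=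
          Nat.cast_choose ℚ (by omega)
        have e2 : (M.choose (R₁-a) : ℚ)
            = (M.factorial : ℚ) / (((R₁-a).factorial : ℚ) * ((R₂ - (C₃-a)).factorial : ℚ)) := by
          have hsub : M - (R₁ - a) = R₂ - (C₃ - a) := by omega
          rw [Nat.cast_choose ℚ (show R₁ - a ≤ M by omega), hsub]
        rw [e1, e2]
        field_simp
      · rw [if_neg hgd, if_neg (by omega), zero_div]
    rw [Finset.sum_congr rfl key, ← Finset.sum_div,
      qvand C₃ M R₁ C₃ (Or.inl le_rfl)]
    have h3 : C₃ + M = R₁ + R₂ := by omega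
    rw [h3]
  have hcsum : ∑ c ∈ range (R₃+1), (if c ≤ C₁ then
      (M.choose (C₁-c) : ℚ) / ((c.factorial : ℚ) * ((R₃-c).factorial : ℚ)) else 0)
      = ((C₁+C₂).choose C₁ : ℚ) / (R₃.factorial : ℚ) := by
    have key : ∀ c ∈ range (R₃+1), (if c ≤ C₁ then
        (M.choose (C₁-c) : ℚ) / ((c.factorial : ℚ) * ((R₃-c).factorial : ℚ)) else 0)
        = (if c ≤ R₃ ∧ C₁ - c ≤ M ∧ c ≤ C₁
            then ((R₃.choose c : ℚ) * (M.choose (C₁-c) : ℚ)) else 0)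
          / (R₃.factorial : ℚ) := by
      intro c hc
      simp only [mem_range] at hc
      by_cases hc1 : c ≤ C₁
      · by_cases hc2 : C₁ - c ≤ M
        · rw [if_pos hc1, if_pos (by omega)]
          have e1 : (R₃.choose c : ℚ)
              = (R₃.factorial : ℚ) / ((c.factorial : ℚ) * ((R₃ - c).factorial : ℚ)) :=
            Nat.cast_choose ℚ (by omega)
          rw [e1]
          field_simp
        · rw [if_pos hc1, if_neg (by omega)]
          have hz : M.choose (C₁-c) = 0 := Nat.choose_eq_zero_of_lt (by omega)
          rw [hz]
          simp
      · rw [if_neg hc1, if_neg (by omega), zero_div]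
    rw [Finset.sum_congr rfl key, ← Finset.sum_div,
      qvand R₃ M C₁ R₃ (Or.inl le_rfl)]
    have h3 : R₃ + M = C₁ + C₂ := by omega
    rw [h3]
  rw [step1, e0, step2, hasum, hcsum]
  have eM : M = C₁ + C₂ - R₃ := by omega
  have c1 : ((R₁+R₂).choose R₁ : ℚ)
      = ((R₁+R₂).factorial : ℚ) / ((R₁.factorial : ℚ) * (R₂.factorial : ℚ)) := by
    rw [Nat.cast_choose ℚ (show R₁ ≤ R₁ + R₂ by omega),
      show R₁ + R₂ - R₁ = R₂ from by omega]
  have c2 : ((C₁+C₂).choose C₁ : ℚ)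
      = ((C₁+C₂).factorial : ℚ) / ((C₁.factorial : ℚ) * (C₂.factorial : ℚ)) := by
    rw [Nat.cast_choose ℚ (show C₁ ≤ C₁ + C₂ by omega),
      show C₁ + C₂ - C₁ = C₂ from by omega]
  rw [c1, c2, eM]
  field_simp
end

section
/- For the 3×3 quasi-independence model with structural zero at (3,3), the UMVUE of the expected count in cell (1,3) equals u_{1·} u_{·3} / (u_{1·} + u_{2·}); that is, Z_A(b − a_{13};1)/Z_A(b;1) = u_{1·}(u_{13}+u_{23})/(u_{1·}+u_{2·}). -/
/-!
Multiplying by `R₁! R₂! R₃!` turns the weight `1 / ∏ u!` of a table into the product of binomial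
coefficients `C(R₁, u₁₃) C(R₂, u₂₃) · C(R₁ - u₁₃, u₁₁) C(R₂ - u₂₃, u₂₁) C(R₃, u₃₁)`. Summing over
the first column by Vandermonde's identity gives `C(R₁ + R₂ + R₃ - C₃, C₁) = C(C₁ + C₂, C₁)`, and
then summing over the third column gives `C(R₁ + R₂, C₃)`. Hence
`Z_A(b; 1) = C(R₁ + R₂, C₃) C(C₁ + C₂, C₁) / (R₁! R₂! R₃!)`, and the ratio reduces to
`n C(n - 1, k - 1) = k C(n, k)`.
-/

open Finset

/-- `Z_A(b;1)` for the 3×3 quasi-independence model with a structural zero at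
cell (3,3), with margins `b = (R₁, R₂, R₃, C₁, C₂, C₃)`; the sum of `1/∏u!`
over all count vectors `u : Fin 8 → ℕ` with these margins. -/
noncomputable def Zquasi (R₁ R₂ R₃ C₁ C₂ C₃ : ℕ) : ℚ :=
  ∑ u ∈ (Fintype.piFinset fun _ : Fin 8 => range (R₁ + R₂ + R₃ + 1)).filter
      (fun u : Fin 8 → ℕ =>
        u 0 + u 1 + u 2 = R₁ ∧ u 3 + u 4 + u 5 = R₂ ∧ u 6 + u 7 = R₃ ∧
        u 0 + u 3 + u 6 = C₁ ∧ u 1 + u 4 + u 7 = C₂ ∧ u 2 + u 5 = C₃),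
    (1 : ℚ) / ∏ k, (Nat.factorial (u k) : ℚ)

open scoped Nat

theorem factorial_add_add (a b c : ℕ) :
    (a + b + c)! = (a + b + c).choose c * (a + b).choose a * (a ! * b ! * c !) := by
  rw [← Nat.add_choose_mul_factorial_mul_factorial (a + b) c,
    ← Nat.add_choose_mul_factorial_mul_factorial a b, Nat.choose_symm_add]
  ring

theorem sum_antidiagonal_choose_mul_sum_antidiagonal (a b c n : ℕ) :
    ∑ q ∈ antidiagonal n, a.choose q.1 * ∑ t ∈ antidiagonal q.2, b.choose t.1 * c.choose t.2
      = (a + b + c).choose n := by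
  simp_rw [← Nat.add_choose_eq]
  rw [add_assoc]

theorem factorial_rows_eq_choose_mul_prod_factorial {R₁ R₂ R₃ : ℕ} (u : Fin 8 → ℕ)
    (h₁ : u 0 + u 1 + u 2 = R₁) (h₂ : u 3 + u 4 + u 5 = R₂) (h₃ : u 6 + u 7 = R₃) :
    R₁ ! * R₂ ! * R₃ ! = R₁.choose (u 2) * R₂.choose (u 5)
      * ((R₁ - u 2).choose (u 0) * ((R₂ - u 5).choose (u 3) * R₃.choose (u 6)))
      * ∏ k, (u k)! := by
  subst h₁ h₂ h₃
  rw [factorial_add_add (u 0), factorial_add_add (u 3),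
    ← Nat.add_choose_mul_factorial_mul_factorial (u 6), ← Nat.choose_symm_add (a := u 6),
    Fin.prod_univ_eight, Nat.add_sub_cancel, Nat.add_sub_cancel]
  ring

theorem factorials_mul_Zquasi {R₁ R₂ R₃ C₁ C₂ C₃ : ℕ} (hcons : R₁ + R₂ + R₃ = C₁ + C₂ + C₃) :
    (R₁ ! * R₂ ! * R₃ ! : ℚ) * Zquasi R₁ R₂ R₃ C₁ C₂ C₃ =
      ((∑ p ∈ antidiagonal C₃, ∑ q ∈ antidiagonal C₁, ∑ t ∈ antidiagonal q.2,
        R₁.choose p.1 * R₂.choose p.2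
          * ((R₁ - p.1).choose q.1 * ((R₂ - p.2).choose t.1 * R₃.choose t.2)) : ℕ) : ℚ) := by
  simp only [Nat.cast_sum]
  rw [sum_congr rfl fun p _ => sum_sigma' _ _ _, ← sum_product']
  unfold Zquasi
  rw [mul_sum]
  -- A table is read off as `((u₁₃, u₂₃), (u₁₁, u₂₁ + u₃₁), (u₂₁, u₃₁))`; an index with nonzero
  -- weight has all binomial coefficients nonzero, so it comes back from a table.
  refine sum_bij_ne_zero (fun u _ _ => ((u 2, u 5), ⟨(u 0, u 3 + u 6), (u 3, u 6)⟩)) ?_ ?_ ?_ ?_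
  · intro u hu _
    simp only [mem_filter] at hu
    simp only [mem_product, mem_sigma, HasAntidiagonal.mem_antidiagonal, and_true]
    omega
  · intro u hu _ v hv _ huv
    simp only [mem_filter] at hu hv
    simp only [Prod.mk.injEq, Sigma.mk.injEq, heq_eq_eq] at huv
    funext k
    fin_cases k <;> simp only [Fin.zero_eta, Fin.mk_one, Fin.reduceFinMk, Fin.isValue] <;> omega
  · rintro ⟨⟨b, b'⟩, ⟨x, s⟩, y, z⟩ hmem hw
    simp only [mem_product, mem_sigma, HasAntidiagonal.mem_antidiagonal] at hmem
    simp only [ne_eq, Nat.cast_eq_zero, mul_eq_zero, Nat.choose_eq_zero_iff, not_or, not_lt] at hw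
    refine ⟨![x, R₁ - b - x, b, y, R₂ - b' - y, b', z, R₃ - z], ?_, by positivity, ?_⟩
    · simp only [mem_filter, Fintype.mem_piFinset, mem_range, Fin.forall_fin_succ, Fin.isValue,
        Matrix.cons_val_zero, Order.lt_add_one_iff, Matrix.cons_val_one, tsub_le_iff_right,
        Matrix.cons_val, Matrix.cons_val_succ, Matrix.cons_val_fin_one, IsEmpty.forall_iff,
        and_true]
      omega
    · simp only [Fin.isValue, Matrix.cons_val, Matrix.cons_val_zero, Prod.mk.injEq,
        Sigma.mk.injEq, true_and, heq_eq_eq, and_true]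
      omega
  · intro u hu _
    obtain ⟨-, h₁, h₂, h₃, -⟩ := mem_filter.1 hu
    rw [mul_one_div, div_eq_iff (by positivity)]
    exact_mod_cast factorial_rows_eq_choose_mul_prod_factorial u h₁ h₂ h₃

theorem sum_antidiagonal_choose_table {R₁ R₂ R₃ C₁ C₂ C₃ : ℕ}
    (hcons : R₁ + R₂ + R₃ = C₁ + C₂ + C₃) :
    ∑ p ∈ antidiagonal C₃, ∑ q ∈ antidiagonal C₁, ∑ t ∈ antidiagonal q.2,
        R₁.choose p.1 * R₂.choose p.2
          * ((R₁ - p.1).choose q.1 * ((R₂ - p.2).choose t.1 * R₃.choose t.2))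
      = (R₁ + R₂).choose C₃ * (C₁ + C₂).choose C₁ := by
  have first_column : ∀ p ∈ antidiagonal C₃,
      ∑ q ∈ antidiagonal C₁, ∑ t ∈ antidiagonal q.2,
        R₁.choose p.1 * R₂.choose p.2
          * ((R₁ - p.1).choose q.1 * ((R₂ - p.2).choose t.1 * R₃.choose t.2))
      = R₁.choose p.1 * R₂.choose p.2 * (C₁ + C₂).choose C₁ := by
    intro p hp
    rw [HasAntidiagonal.mem_antidiagonal] at hp
    simp_rw [← mul_sum]
    rw [sum_antidiagonal_choose_mul_sum_antidiagonal]
    by_cases h : p.1 ≤ R₁ ∧ p.2 ≤ R₂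
    · rw [show R₁ - p.1 + (R₂ - p.2) + R₃ = C₁ + C₂ by omega]
    · have : R₁.choose p.1 * R₂.choose p.2 = 0 := by
        simp only [mul_eq_zero, Nat.choose_eq_zero_iff]
        omega
      rw [this, zero_mul, zero_mul]
  rw [sum_congr rfl first_column, ← sum_mul, ← Nat.add_choose_eq]

theorem Zquasi_eq_choose_mul_choose_div {R₁ R₂ R₃ C₁ C₂ C₃ : ℕ}
    (hcons : R₁ + R₂ + R₃ = C₁ + C₂ + C₃) :
    Zquasi R₁ R₂ R₃ C₁ C₂ C₃
      = (R₁ + R₂).choose C₃ * (C₁ + C₂).choose C₁ / (R₁ ! * R₂ ! * R₃ ! : ℚ) := by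
  rw [eq_div_iff (by positivity), mul_comm, factorials_mul_Zquasi hcons,
    sum_antidiagonal_choose_table hcons, Nat.cast_mul]

theorem UMVUE_quasi_independence_cell13_general
    (R₁ R₂ R₃ C₁ C₂ C₃ : ℕ)
    (hcons : R₁ + R₂ + R₃ = C₁ + C₂ + C₃)
    (h2 : C₃ ≤ R₁ + R₂)
    (hR₁ : 1 ≤ R₁) (hC₃ : 1 ≤ C₃) :
    Zquasi (R₁ - 1) R₂ R₃ C₁ C₂ (C₃ - 1) / Zquasi R₁ R₂ R₃ C₁ C₂ C₃
      = (R₁ * C₃ : ℚ) / (R₁ + R₂) := by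
  obtain ⟨r, rfl⟩ := Nat.exists_eq_add_of_le' hR₁
  obtain ⟨c, rfl⟩ := Nat.exists_eq_add_of_le' hC₃
  have pascal : (r + R₂ + 1 : ℚ) * (r + R₂).choose c = (r + R₂ + 1).choose (c + 1) * (c + 1) := by
    exact_mod_cast Nat.add_one_mul_choose_eq (r + R₂) c
  have hcol : ((C₁ + C₂).choose C₁ : ℚ) ≠ 0 := by exact_mod_cast Nat.choose_ne_zero (by omega)
  have hchoose : ((r + R₂ + 1).choose (c + 1) : ℚ) ≠ 0 := by
    exact_mod_cast Nat.choose_ne_zero (by omega)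
  rw [Nat.add_sub_cancel, Nat.add_sub_cancel, Zquasi_eq_choose_mul_choose_div (by omega),
    Zquasi_eq_choose_mul_choose_div hcons, show r + 1 + R₂ = r + R₂ + 1 by ring,
    Nat.factorial_succ]
  push_cast
  field_simp
  linear_combination pascal

/-- The UMVUE of the expected count in cell (1,3) of the 3×3
quasi-independence model with structural zero at (3,3):
`Z_A(b - a₁₃; 1)/Z_A(b; 1) = R₁ C₃ / (R₁ + R₂)`, where `a₁₃` decrements
`R₁` and `C₃` each by one. -/
theorem UMVUE_quasi_independence_cell13
    (R₁ R₂ R₃ C₁ C₂ C₃ : ℕ)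
    (hcons : R₁ + R₂ + R₃ = C₁ + C₂ + C₃)
    (h1 : R₃ ≤ C₁ + C₂) (h2 : C₃ ≤ R₁ + R₂)
    (hR₁ : 1 ≤ R₁) (hC₃ : 1 ≤ C₃) :
    Zquasi (R₁ - 1) R₂ R₃ C₁ C₂ (C₃ - 1) / Zquasi R₁ R₂ R₃ C₁ C₂ C₃
      = (R₁ * C₃ : ℚ) / (R₁ + R₂) :=
  UMVUE_quasi_independence_cell13_general R₁ R₂ R₃ C₁ C₂ C₃ hcons h2 hR₁ hC₃
end
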